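/- Value gap decomposition for greedy policies (Lemma B.5): In a finite-horizon tabular MDP, let Q̄_h : S×A → ℝ for h = 1,…,H be arbitrary functions, let π̂ be the deterministic greedy policy (π̂_h(s) maximizes Q̄_h(s,·)), set Ṽ_{H+1} ≡ 0 and Ṽ_h(s) := max_{a∈A} Q̄_h(s,a), and define ξ_h(s,a) := (T_h Ṽ_{h+1})(s,a) − Q̄_h(s,a). Then for every policy π, every t ∈ {1,…,H} and every state s: V^π_t(s) − V^{π̂}_t(s) ≤ Σ_{h=t}^H E_π[ ξ_h(s_h,a_h) | s_t = s ] − Σ_{h=t}^H E_{π̂}[ ξ_h(s_h,a_h) | s_t = s ]. -/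

import Mathlib

open Finset

/-- Bellman operator `(T_h V)(s,a) = r_h(s,a) + Σ_{s'} P_h(s'|s,a) V(s')`. -/
noncomputable def bellmanT {S A : Type*} [Fintype S]
    (P : ℕ → S → A → S → ℝ) (r : ℕ → S → A → ℝ)
    (h : ℕ) (V : S → ℝ) (s : S) (a : A) : ℝ :=
  r h s a + ∑ s' : S, P h s a s' * V s'

/-- Value function with `k` steps remaining, starting at time `h`. -/
noncomputable def VpiAux {S A : Type*} [Fintype S] [Fintype A]
    (P : ℕ → S → A → S → ℝ) (r : ℕ → S → A → ℝ) (pol : ℕ → S → A → ℝ) :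
    ℕ → ℕ → S → ℝ
  | 0, _, _ => 0
  | k + 1, h, s => ∑ a : A, pol h s a *
      (r h s a + ∑ s' : S, P h s a s' * VpiAux P r pol k (h + 1) s')

/-- The value function `V^π_h` in the MDP with horizon `H`. -/
noncomputable def Vpi {S A : Type*} [Fintype S] [Fintype A]
    (P : ℕ → S → A → S → ℝ) (r : ℕ → S → A → ℝ) (pol : ℕ → S → A → ℝ)
    (H h : ℕ) (s : S) : ℝ :=
  VpiAux P r pol (H + 1 - h) h s

/-- State occupancy `k` steps after starting from state `s` at time `t`. -/
noncomputable def occAux {S A : Type*} [Fintype S] [Fintype A] [DecidableEq S]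
    (P : ℕ → S → A → S → ℝ) (pol : ℕ → S → A → ℝ) (t : ℕ) (s : S) :
    ℕ → S → ℝ
  | 0, s' => if s' = s then 1 else 0
  | k + 1, s'' => ∑ s' : S, ∑ a : A,
      occAux P pol t s k s' * pol (t + k) s' a * P (t + k) s' a s''

/-- Trajectory expectation `E_π[ g(s_h,a_h) | s_t = s ]`. -/
noncomputable def trajE {S A : Type*} [Fintype S] [Fintype A] [DecidableEq S]
    (P : ℕ → S → A → S → ℝ) (pol : ℕ → S → A → ℝ) (t : ℕ) (s : S)
    (h : ℕ) (g : S → A → ℝ) : ℝ :=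
  ∑ s' : S, ∑ a : A, occAux P pol t s (h - t) s' * pol h s' a * g s' a

/-- A deterministic policy, viewed as a randomized policy (point mass). -/
def detPol {S A : Type*} [DecidableEq A] (pd : ℕ → S → A) : ℕ → S → A → ℝ :=
  fun h s a => if a = pd h s then 1 else 0

/-! For any `V` with `V_{H+1} = 0`, unrolling the Bellman equation of `π` along its trajectory
gives `V^π_t(s) = V_t(s) + Σ_{h=t}^H E_π[(T_h V_{h+1})(s_h,a_h) − V_h(s_h)]`. Take `V = Ṽ` and
split the residual as `ξ_h + (Q̄_h − Ṽ_h)`. The slack `Q̄_h − Ṽ_h` is nonpositive everywhere and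
vanishes at the greedy action, so its expectation is `≤ 0` under `π` and `= 0` under `π̂`;
subtracting the two identities gives the bound. -/

def stepKernel {S A : Type*} [Fintype A] (P : ℕ → S → A → S → ℝ) (pol : ℕ → S → A → ℝ)
    (h : ℕ) (s s' : S) : ℝ :=
  ∑ a, pol h s a * P h s a s'

section Occupancy

variable {S A : Type*} [Fintype S] [Fintype A]
  (P : ℕ → S → A → S → ℝ) (pol : ℕ → S → A → ℝ)

theorem sum_stepKernel_mul (h : ℕ) (s : S) (X : S → ℝ) :
    ∑ s', stepKernel P pol h s s' * X s' = ∑ a, pol h s a * ∑ s', P h s a s' * X s' := by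
  simp only [stepKernel, sum_mul, mul_sum, mul_assoc]
  exact sum_comm

variable [DecidableEq S]

theorem occAux_succ (t : ℕ) (s : S) (k : ℕ) (s'' : S) :
    occAux P pol t s (k + 1) s'' =
      ∑ s', occAux P pol t s k s' * stepKernel P pol (t + k) s' s'' := by
  simp only [occAux, stepKernel, mul_sum, mul_assoc]

theorem occAux_succ_eq_sum_first_step (t : ℕ) (s : S) (k : ℕ) (s'' : S) :
    occAux P pol t s (k + 1) s'' =
      ∑ m, stepKernel P pol t s m * occAux P pol (t + 1) m k s'' := by
  induction k generalizing s'' with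
  | zero => simp [occAux, stepKernel, mul_ite]
  | succ k ih =>
    simp only [occAux_succ P pol _ _ (k + 1), occAux_succ P pol (t + 1) _ k, ih, sum_mul,
      mul_sum, mul_assoc, add_right_comm t 1 k]
    exact sum_comm

theorem occAux_nonneg (t : ℕ) (s : S) (k : ℕ)
    (hP : ∀ j < k, ∀ s a s', 0 ≤ P (t + j) s a s')
    (hpol : ∀ j < k, ∀ s a, 0 ≤ pol (t + j) s a) (s' : S) :
    0 ≤ occAux P pol t s k s' := by
  induction k generalizing s' with
  | zero => exact ite_nonneg zero_le_one le_rfl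
  | succ k ih =>
    rw [occAux_succ]
    refine sum_nonneg fun m _ => mul_nonneg (ih (fun j hj => hP j (by omega))
      (fun j hj => hpol j (by omega)) m) (sum_nonneg fun a _ => ?_)
    exact mul_nonneg (hpol k k.lt_add_one m a) (hP k k.lt_add_one m a s')

theorem trajE_self (t : ℕ) (s : S) (g : S → A → ℝ) :
    trajE P pol t s t g = ∑ a, pol t s a * g s a := by
  simp [trajE, occAux, ite_mul]

theorem trajE_eq_sum_first_step {t h : ℕ} (hth : t < h) (s : S) (g : S → A → ℝ) :
    trajE P pol t s h g = ∑ m, stepKernel P pol t s m * trajE P pol (t + 1) m h g := by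
  have hk : h - t = h - (t + 1) + 1 := by omega
  simp only [trajE, hk, occAux_succ_eq_sum_first_step, sum_mul, mul_sum, mul_assoc]
  exact sum_comm_cycle

theorem trajE_add (t : ℕ) (s : S) (h : ℕ) (g₁ g₂ : S → A → ℝ) :
    trajE P pol t s h (fun s' a => g₁ s' a + g₂ s' a) =
      trajE P pol t s h g₁ + trajE P pol t s h g₂ := by
  simp only [trajE, mul_add, sum_add_distrib]

theorem trajE_nonpos {t h : ℕ} (hth : t ≤ h) (hP : ∀ i ∈ Ico t h, ∀ s a s', 0 ≤ P i s a s')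
    (hpol : ∀ i ∈ Icc t h, ∀ s a, 0 ≤ pol i s a) (s : S) {g : S → A → ℝ}
    (hg : ∀ s a, g s a ≤ 0) : trajE P pol t s h g ≤ 0 := by
  have hocc := occAux_nonneg P pol t s (h - t) (fun j hj => hP _ (mem_Ico.2 (by omega)))
    (fun j hj => hpol _ (mem_Icc.2 (by omega)))
  exact sum_nonpos fun s' _ => sum_nonpos fun a _ => mul_nonpos_of_nonneg_of_nonpos
    (mul_nonneg (hocc s') (hpol h (mem_Icc.2 ⟨hth, le_rfl⟩) s' a)) (hg s' a)

theorem sum_Icc_trajE_nonpos {t H : ℕ} (hP : ∀ i ∈ Icc t H, ∀ s a s', 0 ≤ P i s a s')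
    (hpol : ∀ i ∈ Icc t H, ∀ s a, 0 ≤ pol i s a) (s : S) {g : ℕ → S → A → ℝ}
    (hg : ∀ h ∈ Icc t H, ∀ s a, g h s a ≤ 0) :
    ∑ h ∈ Icc t H, trajE P pol t s h (g h) ≤ 0 := by
  refine sum_nonpos fun h hh => ?_
  have hh' := mem_Icc.1 hh
  exact trajE_nonpos P pol hh'.1
    (fun i hi => hP i (Icc_subset_Icc_right hh'.2 (Ico_subset_Icc_self hi)))
    (fun i hi => hpol i (Icc_subset_Icc_right hh'.2 hi)) s (hg h hh)

theorem trajE_eq_zero_of_mul_eq_zero {t h : ℕ} (s : S) {g : S → A → ℝ}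
    (hg : ∀ s a, pol h s a * g s a = 0) : trajE P pol t s h g = 0 := by
  simp [trajE, mul_assoc, hg]

theorem sum_Icc_trajE_eq_first_step {t H : ℕ} (htH : t ≤ H) (s : S) (g : ℕ → S → A → ℝ) :
    ∑ h ∈ Icc t H, trajE P pol t s h (g h) = ∑ a, pol t s a * g t s a +
      ∑ m, stepKernel P pol t s m * ∑ h ∈ Icc (t + 1) H, trajE P pol (t + 1) m h (g h) := by
  rw [← sum_Ioc_add_eq_sum_Icc htH, add_comm, trajE_self, Icc_add_one_left_eq_Ioc]
  simp only [mul_sum]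
  rw [sum_comm]
  exact congrArg _ (sum_congr rfl fun h hh => trajE_eq_sum_first_step P pol (mem_Ioc.1 hh).1 s _)

end Occupancy

section Value

variable {S A : Type*} [Fintype S] [Fintype A]
  (P : ℕ → S → A → S → ℝ) (r : ℕ → S → A → ℝ) (pol : ℕ → S → A → ℝ)

theorem Vpi_succ_horizon (H : ℕ) (s : S) : Vpi P r pol H (H + 1) s = 0 := by
  simp [Vpi, VpiAux]

theorem Vpi_eq_sum_bellmanT {H t : ℕ} (htH : t ≤ H) (s : S) :
    Vpi P r pol H t s = ∑ a, pol t s a * bellmanT P r t (Vpi P r pol H (t + 1)) s a := by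
  rw [Vpi, show H + 1 - t = H + 1 - (t + 1) + 1 by omega, VpiAux]
  rfl

theorem Vpi_eq_add_sum_trajE_bellman_residual [DecidableEq S] (V : ℕ → S → ℝ) {H t : ℕ}
    (htH : t ≤ H + 1) (hV : ∀ s, V (H + 1) s = 0)
    (hpol : ∀ h ∈ Icc t H, ∀ s, ∑ a, pol h s a = 1) (s : S) :
    Vpi P r pol H t s = V t s + ∑ h ∈ Icc t H,
      trajE P pol t s h (fun s' a => bellmanT P r h (V (h + 1)) s' a - V h s') := by
  induction htH using Nat.decreasingInduction generalizing s with
  | self => simp [Vpi_succ_horizon, hV]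
  | of_succ t htH ih =>
    have ht : t ≤ H := Nat.lt_succ_iff.1 htH
    have ih' := ih fun h hh => hpol h (Icc_subset_Icc_left t.le_succ hh)
    calc Vpi P r pol H t s
        = ∑ a, pol t s a * bellmanT P r t (Vpi P r pol H (t + 1)) s a :=
          Vpi_eq_sum_bellmanT P r pol ht s
      _ = ∑ a, pol t s a * bellmanT P r t (V (t + 1)) s a + ∑ m, stepKernel P pol t s m *
            ∑ h ∈ Icc (t + 1) H, trajE P pol (t + 1) m h
              (fun s' a => bellmanT P r h (V (h + 1)) s' a - V h s') := by
          rw [sum_stepKernel_mul, ← sum_add_distrib]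
          refine sum_congr rfl fun a _ => ?_
          simp only [bellmanT, ih', mul_add, sum_add_distrib, add_assoc]
      _ = V t s + (∑ a, pol t s a * (bellmanT P r t (V (t + 1)) s a - V t s) +
            ∑ m, stepKernel P pol t s m * ∑ h ∈ Icc (t + 1) H, trajE P pol (t + 1) m h
              (fun s' a => bellmanT P r h (V (h + 1)) s' a - V h s')) := by
          simp only [mul_sub, sum_sub_distrib, ← sum_mul, hpol t (mem_Icc.2 ⟨le_rfl, ht⟩) s]
          ring
      _ = _ := by rw [sum_Icc_trajE_eq_first_step P pol ht s]

theorem Vpi_eq_add_sum_trajE_residual_add_slack [DecidableEq S] (V : ℕ → S → ℝ)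
    (Q : ℕ → S → A → ℝ) {H t : ℕ} (htH : t ≤ H + 1) (hV : ∀ s, V (H + 1) s = 0)
    (hpol : ∀ h ∈ Icc t H, ∀ s, ∑ a, pol h s a = 1) (s : S) :
    Vpi P r pol H t s = V t s +
      (∑ h ∈ Icc t H, trajE P pol t s h (fun s' a => bellmanT P r h (V (h + 1)) s' a - Q h s' a)) +
      ∑ h ∈ Icc t H, trajE P pol t s h (fun s' a => Q h s' a - V h s') := by
  rw [Vpi_eq_add_sum_trajE_bellman_residual P r pol V htH hV hpol s, add_assoc,
    ← sum_add_distrib]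
  simp only [← trajE_add, sub_add_sub_cancel]

end Value

section Greedy

variable {S A : Type*} [Fintype A] [DecidableEq A]

theorem sum_detPol (pd : ℕ → S → A) (h : ℕ) (s : S) : ∑ a, detPol pd h s a = 1 := by
  simp [detPol]

theorem detPol_mul_sub_sup'_eq_zero [Nonempty A] (pd : ℕ → S → A) {Q : ℕ → S → A → ℝ}
    {h : ℕ} {s : S} (hgreedy : ∀ a, Q h s a ≤ Q h s (pd h s)) (a : A) :
    detPol pd h s a * (Q h s a - univ.sup' univ_nonempty (Q h s)) = 0 := by
  rw [detPol, le_antisymm (sup'_le _ _ fun a _ => hgreedy a) (le_sup' (Q h s) (mem_univ _))]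
  split_ifs with ha <;> simp [ha]

end Greedy

theorem value_gap_decomposition_greedy_general
    {S A : Type*} [Fintype S] [Fintype A] [Nonempty A]
    [DecidableEq S] [DecidableEq A]
    (H : ℕ)
    (P : ℕ → S → A → S → ℝ)
    (hPnn : ∀ h ∈ Icc 1 H, ∀ s a s', 0 ≤ P h s a s')
    (r : ℕ → S → A → ℝ)
    (Qbar : ℕ → S → A → ℝ) (Vtil : ℕ → S → ℝ) (pd : ℕ → S → A)
    (hGreedy : ∀ h ∈ Icc 1 H, ∀ s a, Qbar h s a ≤ Qbar h s (pd h s))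
    (hVtop : ∀ s, Vtil (H + 1) s = 0)
    (hVtil : ∀ h ∈ Icc 1 H, ∀ s,
      Vtil h s = univ.sup' univ_nonempty (fun a => Qbar h s a)) :
    ∀ pol : ℕ → S → A → ℝ,
      (∀ h ∈ Icc 1 H, ∀ s a, 0 ≤ pol h s a) →
      (∀ h ∈ Icc 1 H, ∀ s, ∑ a : A, pol h s a = 1) →
      ∀ t ∈ Icc 1 H, ∀ s : S,
        Vpi P r pol H t s - Vpi P r (detPol pd) H t s ≤
          (∑ h ∈ Icc t H, trajE P pol t s h
              (fun s' a => bellmanT P r h (Vtil (h + 1)) s' a - Qbar h s' a)) -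
          (∑ h ∈ Icc t H, trajE P (detPol pd) t s h
              (fun s' a => bellmanT P r h (Vtil (h + 1)) s' a - Qbar h s' a)) := by
  intro pol hpol_nn hpol_sum t ht s
  have hsub : Icc t H ⊆ Icc 1 H := Icc_subset_Icc_left (mem_Icc.1 ht).1
  have htH : t ≤ H + 1 := by linarith [(mem_Icc.1 ht).2]
  have hslack_nonpos : ∀ h ∈ Icc t H, ∀ s a, Qbar h s a - Vtil h s ≤ 0 := fun h hh s a => by
    rw [hVtil h (hsub hh), sub_nonpos]
    exact le_sup' (fun a => Qbar h s a) (mem_univ a)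
  have hslack_greedy : ∀ h ∈ Icc t H, ∀ s a, detPol pd h s a * (Qbar h s a - Vtil h s) = 0 :=
    fun h hh s a => by
      rw [hVtil h (hsub hh)]
      exact detPol_mul_sub_sup'_eq_zero pd (hGreedy h (hsub hh) s) a
  rw [Vpi_eq_add_sum_trajE_residual_add_slack P r pol Vtil Qbar htH hVtop
      (fun h hh => hpol_sum h (hsub hh)) s,
    Vpi_eq_add_sum_trajE_residual_add_slack P r (detPol pd) Vtil Qbar htH hVtop
      (fun h _ => sum_detPol pd h) s]
  have hπ := sum_Icc_trajE_nonpos P pol (fun h hh => hPnn h (hsub hh))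
    (fun h hh => hpol_nn h (hsub hh)) s hslack_nonpos
  have hπ_greedy := sum_eq_zero fun h hh =>
    trajE_eq_zero_of_mul_eq_zero P (detPol pd) (t := t) s (hslack_greedy h hh)
  linarith

/-- Value gap decomposition for greedy policies (Lemma B.5): for the greedy policy `π̂`
of arbitrary functions `Q̄_h` and `ξ_h := T_h Ṽ_{h+1} − Q̄_h`, every policy `π`,
`t ∈ {1,…,H}` and state `s` satisfy
`V^π_t(s) − V^{π̂}_t(s) ≤ Σ_{h=t}^H E_π[ξ_h | s_t=s] − Σ_{h=t}^H E_{π̂}[ξ_h | s_t=s]`. -/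
theorem value_gap_decomposition_greedy
    {S A : Type*} [Fintype S] [Fintype A] [Nonempty S] [Nonempty A]
    [DecidableEq S] [DecidableEq A]
    (H : ℕ) (hH : 1 ≤ H)
    (P : ℕ → S → A → S → ℝ)
    (hPnn : ∀ h ∈ Icc 1 H, ∀ s a s', 0 ≤ P h s a s')
    (hPsum : ∀ h ∈ Icc 1 H, ∀ s a, ∑ s' : S, P h s a s' = 1)
    (r : ℕ → S → A → ℝ)
    (hrnn : ∀ h ∈ Icc 1 H, ∀ s a, 0 ≤ r h s a)
    (hr1 : ∀ h ∈ Icc 1 H, ∀ s a, r h s a ≤ 1)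
    (Qbar : ℕ → S → A → ℝ) (Vtil : ℕ → S → ℝ) (pd : ℕ → S → A)
    (hGreedy : ∀ h ∈ Icc 1 H, ∀ s a, Qbar h s a ≤ Qbar h s (pd h s))
    (hVtop : ∀ s, Vtil (H + 1) s = 0)
    (hVtil : ∀ h ∈ Icc 1 H, ∀ s,
      Vtil h s = univ.sup' univ_nonempty (fun a => Qbar h s a)) :
    ∀ pol : ℕ → S → A → ℝ,
      (∀ h ∈ Icc 1 H, ∀ s a, 0 ≤ pol h s a) →
      (∀ h ∈ Icc 1 H, ∀ s, ∑ a : A, pol h s a = 1) →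
      ∀ t ∈ Icc 1 H, ∀ s : S,
        Vpi P r pol H t s - Vpi P r (detPol pd) H t s ≤
          (∑ h ∈ Icc t H, trajE P pol t s h
              (fun s' a => bellmanT P r h (Vtil (h + 1)) s' a - Qbar h s' a)) -
          (∑ h ∈ Icc t H, trajE P (detPol pd) t s h
              (fun s' a => bellmanT P r h (Vtil (h + 1)) s' a - Qbar h s' a)) :=
  value_gap_decomposition_greedy_general H P hPnn r Qbar Vtil pd hGreedy hVtop hVtil
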